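/- arXiv:0802.3865 — 6 statements merged into one kernel-verified Lean document; each statement's English description precedes it below -/
import Mathlib

section
/- Let L be a Lie-like algebra^{2-nd} induced by a set S, and for k ∈ S define r_k(x)(a) := ⟨a, x⟩_k and ℓ_k(x)(a) := ⟨x, a⟩_k. Then (L, {−r_k}, {ℓ_k}_{k∈S}) is an ordinary L-module, i.e., setting f_k := −r_k and g_k := ℓ_k, all five module axioms hold. -/
/-!
Everything reduces to two identities for the brackets: the Jacobi-type axiom combined with the
index swap gives `⟨x, ⟨y, z⟩_h⟩_s = ⟨⟨x, y⟩_h, z⟩_s - ⟨⟨x, z⟩_h, y⟩_s`, whose right-hand side is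
antisymmetric in `y, z` and, again by the index swap, symmetric in `h, s`. Evaluating each module
axiom at a vector `a` turns it into one of these identities or into the index swap itself.
-/

structure IsLieLike2 {R L S : Type*} [CommSemiring R] [AddCommGroup L] [Module R L]
    (br : S → L →ₗ[R] L →ₗ[R] L) : Prop where
  jacobi : ∀ (s h : S) (x y z : L), br h (br s x y) z = br s x (br h y z) + br s (br h x z) y
  swap : ∀ (s h : S) (x y z : L), br h (br s x y) z = br s (br h x y) z

structure IsOrdinaryModule {R L V S : Type*} [CommSemiring R] [AddCommGroup L] [Module R L]
    [AddCommGroup V] [Module R V] (br : S → L →ₗ[R] L →ₗ[R] L)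
    (f g : S → L → Module.End R V) : Prop where
  f_bracket : ∀ (h k : S) (x y : L), f h (br k x y) = f h x * f k y - f k y * f h x
  g_bracket : ∀ (h k : S) (x y : L), g h (br k x y) = g h x * f k y - f k y * g h x
  g_mul_g : ∀ (h k : S) (x y : L), g k x * g h y = g h x * f k y
  g_mul_f : ∀ (h k : S) (x y : L), g h x * f k y = g k x * f h y
  f_mul_f : ∀ (h k : S) (x y : L), f k x * f h y = f h x * f k y
  f_mul_g : ∀ (h k : S) (x y : L), f k x * g h y = f h x * g k y

namespace IsLieLike2

variable {R L S : Type*} [CommSemiring R] [AddCommGroup L] [Module R L]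
  {br : S → L →ₗ[R] L →ₗ[R] L}

theorem br_br_right (hL : IsLieLike2 br) (s h : S) (x y z : L) :
    br s x (br h y z) = br s (br h x y) z - br s (br h x z) y := by
  rw [eq_sub_iff_add_eq, ← hL.swap s h x y z, hL.jacobi s h x y z]

theorem br_br_right_antisymm (hL : IsLieLike2 br) (s h : S) (x y z : L) :
    br s x (br h z y) = -br s x (br h y z) := by
  rw [hL.br_br_right s h x z y, hL.br_br_right s h x y z, neg_sub]

theorem br_br_right_comm (hL : IsLieLike2 br) (s h : S) (x y z : L) :
    br s x (br h y z) = br h x (br s y z) := by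
  rw [hL.br_br_right, hL.br_br_right, hL.swap s h, hL.swap s h]

/-- The adjoint module `(L, {-r_k}, {ℓ_k})`, with `r_k x = ⟨·, x⟩_k` and `ℓ_k x = ⟨x, ·⟩_k`. -/
theorem isOrdinaryModule_adjoint (hL : IsLieLike2 br) :
    IsOrdinaryModule br (fun k x => -(br k).flip x) (fun k x => br k x) where
  f_bracket h k x y := by
    ext a
    simp only [Module.End.mul_apply, LinearMap.sub_apply, LinearMap.neg_apply,
      LinearMap.flip_apply, map_neg, neg_neg]
    rw [hL.br_br_right h k, hL.swap k h]
    abel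
  g_bracket h k x y := by
    ext a
    simp only [Module.End.mul_apply, LinearMap.sub_apply, LinearMap.neg_apply,
      LinearMap.flip_apply, map_neg]
    rw [hL.jacobi h k x a y]
    abel
  g_mul_g h k x y := by
    ext a
    simp only [Module.End.mul_apply, LinearMap.neg_apply, LinearMap.flip_apply, map_neg]
    rw [hL.br_br_right_antisymm, hL.br_br_right_comm]
  g_mul_f h k x y := by
    ext a
    simp only [Module.End.mul_apply, LinearMap.neg_apply, LinearMap.flip_apply, map_neg]
    rw [hL.br_br_right_comm]
  f_mul_f h k x y := by
    ext a
    simp only [Module.End.mul_apply, LinearMap.neg_apply, LinearMap.flip_apply, map_neg, neg_neg]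
    exact hL.swap h k a y x
  f_mul_g h k x y := by
    ext a
    simp only [Module.End.mul_apply, LinearMap.neg_apply, LinearMap.flip_apply]
    rw [hL.swap h k y a x]

end IsLieLike2

theorem stmt_3_general {K : Type*} [Field K] {S : Type*}
    {L : Type*} [AddCommGroup L] [Module K L]
    (br : S → L →ₗ[K] L →ₗ[K] L)
    (hjac : ∀ (s h : S) (x y z : L),
      br h (br s x y) z = br s x (br h y z) + br s (br h x z) y)
    (hsw : ∀ (s h : S) (x y z : L), br h (br s x y) z = br s (br h x y) z)
    (f g : S → L → Module.End K L)
    (hfdef : ∀ (k : S) (x : L), f k x = -((br k).flip x))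
    (hgdef : ∀ (k : S) (x : L), g k x = br k x) :
    (∀ (h k : S) (x y : L), f h (br k x y) = f h x * f k y - f k y * f h x) ∧
    (∀ (h k : S) (x y : L), g h (br k x y) = g h x * f k y - f k y * g h x) ∧
    (∀ (h k : S) (x y : L),
      g k x * g h y = g h x * f k y ∧ g h x * f k y = g k x * f h y) ∧
    (∀ (h k : S) (x y : L), f k x * f h y = f h x * f k y) ∧
    (∀ (h k : S) (x y : L), f k x * g h y = f h x * g k y) := by
  obtain rfl : f = fun k x => -(br k).flip x := funext fun k => funext (hfdef k)
  obtain rfl : g = fun k x => br k x := funext fun k => funext (hgdef k)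
  have hM := IsLieLike2.isOrdinaryModule_adjoint ⟨hjac, hsw⟩
  exact ⟨hM.f_bracket, hM.g_bracket, fun h k x y => ⟨hM.g_mul_g h k x y, hM.g_mul_f h k x y⟩,
    hM.f_mul_f, hM.f_mul_g⟩

/-- The adjoint module: (L, {−r_k}, {ℓ_k}) is an ordinary module over a
    Lie-like algebra^{2-nd} L, where r_k(x)(a) = ⟨a,x⟩_k and ℓ_k(x)(a) = ⟨x,a⟩_k. -/
theorem stmt_3 {K : Type*} [Field K] {S : Type*} [Nonempty S]
    {L : Type*} [AddCommGroup L] [Module K L]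
    (br : S → L →ₗ[K] L →ₗ[K] L)
    (hjac : ∀ (s h : S) (x y z : L),
      br h (br s x y) z = br s x (br h y z) + br s (br h x z) y)
    (hsw : ∀ (s h : S) (x y z : L), br h (br s x y) z = br s (br h x y) z)
    (f g : S → L → Module.End K L)
    (hfdef : ∀ (k : S) (x : L), f k x = -((br k).flip x))
    (hgdef : ∀ (k : S) (x : L), g k x = br k x) :
    (∀ (h k : S) (x y : L), f h (br k x y) = f h x * f k y - f k y * f h x) ∧
    (∀ (h k : S) (x y : L), g h (br k x y) = g h x * f k y - f k y * g h x) ∧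
    (∀ (h k : S) (x y : L),
      g k x * g h y = g h x * f k y ∧ g h x * f k y = g k x * f h y) ∧
    (∀ (h k : S) (x y : L), f k x * f h y = f h x * f k y) ∧
    (∀ (h k : S) (x y : L), f k x * g h y = f h x * g k y) :=
  stmt_3_general br hjac hsw f g hfdef hgdef
end

section
/- Let (V, {f_k}, {g_k}_{k∈S}) be an ordinary module over a Lie-like algebra^{2-nd} L. Then the plus annihilator V^{ann,+} := span{ (g_h(x) − f_k(x))(v) : x ∈ L, v ∈ V, h, k ∈ S } is an ordinary submodule of V, i.e., it is invariant under f_k(x) and g_k(x) for all x ∈ L and k ∈ S. -/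
/-!
The generators of `V^{ann,+}` are mapped by `g_k(x)` into `V^{ann,+}`: by the axiom
`g_k(x) g_s(y) = g_s(x) f_k(y)` and `g_k(x) f_t(y) = g_t(x) f_k(y)` one gets
`g_k(x) (g_s(y) - f_t(y)) = (g_s(x) - f_k(x)) f_k(y) - (g_t(x) - f_k(x)) f_k(y)`.
For `f_k(x)` nothing is needed: `f_k(x) v` and `g_k(x) v` differ by the generator
`(g_k(x) - f_k(x)) v`.
-/

namespace OrdinaryModule

variable {R : Type*} [Ring R] {V : Type*} [AddCommGroup V] [Module R V]
  {S L : Type*} (f g : S → L → Module.End R V)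

def plusAnnihilator : Submodule R V :=
  Submodule.span R {w | ∃ (s t : S) (y : L) (v : V), w = (g s y - f t y) v}

theorem sub_apply_mem_plusAnnihilator (s t : S) (y : L) (v : V) :
    (g s y - f t y) v ∈ plusAnnihilator f g :=
  Submodule.subset_span ⟨s, t, y, v, rfl⟩

theorem apply_mem_plusAnnihilator_iff (k : S) (x : L) (v : V) :
    f k x v ∈ plusAnnihilator f g ↔ g k x v ∈ plusAnnihilator f g := by
  have hdiff : f k x v = g k x v - (g k x - f k x) v := by
    simp only [LinearMap.sub_apply, sub_sub_cancel]
  rw [hdiff, Submodule.sub_mem_iff_left _ (sub_apply_mem_plusAnnihilator f g k k x v)]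

variable {f g}

theorem g_mul_sub_eq
    (hgg : ∀ (h k : S) (x y : L),
      g k x * g h y = g h x * f k y ∧ g h x * f k y = g k x * f h y)
    (k s t : S) (x y : L) :
    g k x * (g s y - f t y) = (g s x - f k x) * f k y - (g t x - f k x) * f k y := by
  rw [mul_sub, (hgg s k x y).1, ← (hgg t k x y).2, sub_mul, sub_mul]
  abel

theorem plusAnnihilator_le_comap
    (hgg : ∀ (h k : S) (x y : L),
      g k x * g h y = g h x * f k y ∧ g h x * f k y = g k x * f h y)
    (k : S) (x : L) :
    plusAnnihilator f g ≤ (plusAnnihilator f g).comap (g k x) := by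
  refine Submodule.span_le.mpr ?_
  rintro _ ⟨s, t, y, v, rfl⟩
  change (g k x * (g s y - f t y)) v ∈ plusAnnihilator f g
  rw [g_mul_sub_eq hgg, LinearMap.sub_apply]
  exact sub_mem (sub_apply_mem_plusAnnihilator f g s k x _)
    (sub_apply_mem_plusAnnihilator f g t k x _)

end OrdinaryModule

open OrdinaryModule in
theorem stmt_4_general {K : Type*} [Field K] {S : Type*}
    {L : Type*} [AddCommGroup L] [Module K L]
    {V : Type*} [AddCommGroup V] [Module K V]
    (f g : S → L →ₗ[K] Module.End K V)
    (hgg : ∀ (h k : S) (x y : L),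
      g k x * g h y = g h x * f k y ∧ g h x * f k y = g k x * f h y) :
    ∀ v ∈ Submodule.span K
        {w : V | ∃ (s t : S) (y : L) (v' : V), w = (g s y - f t y) v'},
      ∀ (k : S) (x : L),
        f k x v ∈ Submodule.span K
          {w : V | ∃ (s t : S) (y : L) (v' : V), w = (g s y - f t y) v'} ∧
        g k x v ∈ Submodule.span K
          {w : V | ∃ (s t : S) (y : L) (v' : V), w = (g s y - f t y) v'} := by
  intro v hv k x
  have hgv : g k x v ∈ plusAnnihilator (fun s => f s) (fun s => g s) :=
    plusAnnihilator_le_comap (f := fun s => f s) (g := fun s => g s) hgg k x hv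
  exact ⟨(apply_mem_plusAnnihilator_iff _ _ k x v).mpr hgv, hgv⟩

/-- The plus annihilator of an ordinary module is an ordinary submodule. -/
theorem stmt_4 {K : Type*} [Field K] {S : Type*} [Nonempty S]
    {L : Type*} [AddCommGroup L] [Module K L]
    {V : Type*} [AddCommGroup V] [Module K V]
    (br : S → L →ₗ[K] L →ₗ[K] L)
    (hjac : ∀ (s h : S) (x y z : L),
      br h (br s x y) z = br s x (br h y z) + br s (br h x z) y)
    (hsw : ∀ (s h : S) (x y z : L), br h (br s x y) z = br s (br h x y) z)
    (f g : S → L →ₗ[K] Module.End K V)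
    (hf : ∀ (h k : S) (x y : L), f h (br k x y) = f h x * f k y - f k y * f h x)
    (hg : ∀ (h k : S) (x y : L), g h (br k x y) = g h x * f k y - f k y * g h x)
    (hgg : ∀ (h k : S) (x y : L),
      g k x * g h y = g h x * f k y ∧ g h x * f k y = g k x * f h y)
    (hff : ∀ (h k : S) (x y : L), f k x * f h y = f h x * f k y)
    (hfg : ∀ (h k : S) (x y : L), f k x * g h y = f h x * g k y) :
    ∀ v ∈ Submodule.span K
        {w : V | ∃ (s t : S) (y : L) (v' : V), w = (g s y - f t y) v'},
      ∀ (k : S) (x : L),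
        f k x v ∈ Submodule.span K
          {w : V | ∃ (s t : S) (y : L) (v' : V), w = (g s y - f t y) v'} ∧
        g k x v ∈ Submodule.span K
          {w : V | ∃ (s t : S) (y : L) (v' : V), w = (g s y - f t y) v'} :=
  stmt_4_general f g hgg
end

section
/- Let V be a finite-dimensional vector space over a field k of characteristic 0, let 𝒢 and 𝒜 be subspaces of gl(V) with [𝒜, X] ⊆ 𝒜 for every X ∈ 𝒢, and let φ : 𝒜 → k be a linear functional. Then the joint eigenspace U := { u ∈ V : A(u) = φ(A) u for all A ∈ 𝒜 } is invariant under 𝒢, i.e., X(U) ⊆ U for all X ∈ 𝒢. -/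
/-!
Let `𝔞` be the Lie subalgebra of `gl(V)` generated by `𝒜`. Since `ad X` is a derivation preserving
`𝒜`, it preserves `𝔞`, so `X` normalizes `𝔞`. A bracket of two operators acting by scalars on the
joint eigenspace `U` acts on `U` by zero, so all of `𝔞` acts on `U` by scalars and `U` lies in a
weight space of `𝔞` whose weight extends `φ`. Lie's invariance lemma (the trace of `[X, b]` on the
`X`-cyclic subspace generated by a weight vector is both zero and a nonzero multiple of the weight
of `[X, b]`) then shows that `X` maps `U` into that weight space.
-/

open LieModule LieSubalgebra

attribute [local instance] LieRing.ofAssociativeRing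

theorem LieSubalgebra.mem_normalizer_lieSpan_of_lie_mem {R L : Type*} [CommRing R] [LieRing L]
    [LieAlgebra R L] {s : Set L} {x : L} (hx : ∀ y ∈ s, ⁅x, y⁆ ∈ s) :
    x ∈ (lieSpan R L s).normalizer := by
  rw [mem_normalizer_iff]
  intro y hy
  induction hy using lieSpan_induction with
  | mem y hy => exact subset_lieSpan (hx y hy)
  | zero => simp
  | add y z _ _ hy hz => simpa [lie_add] using add_mem hy hz
  | smul c y _ hy => simpa [lie_smul] using LieSubalgebra.smul_mem _ c hy
  | lie y z hy' hz' hy hz =>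
    rw [leibniz_lie]
    exact add_mem (lie_mem _ hy hz') (lie_mem _ hy' hz)

namespace Module.End

variable {K V : Type*} [Field K] [AddCommGroup V] [Module K V]

def scalarsOn (U : Set V) : LieSubalgebra K (Module.End K V) where
  carrier := {B | ∃ c : K, ∀ v ∈ U, B v = c • v}
  zero_mem' := ⟨0, by simp⟩
  add_mem' := by
    rintro B C ⟨b, hB⟩ ⟨c, hC⟩
    exact ⟨b + c, fun v hv => by simp [hB v hv, hC v hv, add_smul]⟩
  smul_mem' := by
    rintro t B ⟨b, hB⟩
    exact ⟨t * b, fun v hv => by simp [hB v hv, mul_smul]⟩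
  lie_mem' := by
    rintro B C ⟨b, hB⟩ ⟨c, hC⟩
    refine ⟨0, fun v hv => ?_⟩
    rw [Ring.lie_def, LinearMap.sub_apply, mul_apply, mul_apply, hB v hv, hC v hv, map_smul,
      map_smul, hB v hv, hC v hv, smul_smul, smul_smul, mul_comm, sub_self, zero_smul]

theorem forall_apply_eq_smul_of_mem_normalizer [CharZero K] [FiniteDimensional K V]
    {𝔞 : LieSubalgebra K (Module.End K V)} {X : Module.End K V} (hX : X ∈ 𝔞.normalizer)
    (χ : 𝔞 → K) {u : V} (hu : ∀ b : 𝔞, (b : Module.End K V) u = χ b • u) (b : 𝔞) :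
    (b : Module.End K V) (X u) = χ b • X u := by
  obtain ⟨I, hI⟩ := exists_nested_lieIdeal_ofLe_normalizer 𝔞.le_normalizer le_rfl
  have hmemI (y : 𝔞.normalizer) : y ∈ I ↔ (y : Module.End K V) ∈ 𝔞 := by
    rw [← LieIdeal.mem_toLieSubalgebra, hI, mem_ofLe]
  let χI (i : I) : K := χ ⟨i, (hmemI i).mp i.2⟩
  have hu_weight : u ∈ weightSpace V χI := (mem_weightSpace χI u).mpr fun i => hu ⟨i, _⟩
  have hXu : ⁅(⟨X, hX⟩ : 𝔞.normalizer), u⁆ ∈ weightSpace V χI :=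
    (weightSpaceOfIsLieTower K V χI).lie_mem hu_weight
  exact (mem_weightSpace χI _).mp hXu ⟨⟨b, 𝔞.le_normalizer b.2⟩, (hmemI _).mpr b.2⟩

end Module.End

/-- If 𝒢 normalizes 𝒜 in gl(V), the joint eigenspace of 𝒜 with eigenvalue
    functional φ is invariant under 𝒢. -/
theorem stmt_5 {K : Type*} [Field K] [CharZero K]
    {V : Type*} [AddCommGroup V] [Module K V] [FiniteDimensional K V]
    (G A : Submodule K (Module.End K V))
    (hnorm : ∀ X ∈ G, ∀ a ∈ A, a * X - X * a ∈ A)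
    (φ : A →ₗ[K] K) :
    ∀ X ∈ G, ∀ u : V,
      (∀ a : A, (a : Module.End K V) u = φ a • u) →
      ∀ a : A, (a : Module.End K V) (X u) = φ a • (X u) := by
  intro X hX u hu a
  obtain rfl | hu0 := eq_or_ne u 0
  · simp
  set 𝔞 := lieSpan K (Module.End K V) (A : Set (Module.End K V))
  have h𝔞 : 𝔞 ≤ Module.End.scalarsOn {v | ∀ a : A, (a : Module.End K V) v = φ a • v} :=
    lieSpan_le.mpr fun b hb => ⟨φ ⟨b, hb⟩, fun v hv => hv ⟨b, hb⟩⟩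
  have hX𝔞 : X ∈ 𝔞.normalizer := mem_normalizer_lieSpan_of_lie_mem fun b hb => by
    rw [SetLike.mem_coe, Ring.lie_def, ← neg_mem_iff, neg_sub]
    exact hnorm X hX b hb
  let χ (b : 𝔞) : K := (h𝔞 b.2).choose
  have hχ (b : 𝔞) : (b : Module.End K V) u = χ b • u := (h𝔞 b.2).choose_spec u hu
  let a' : 𝔞 := ⟨a, subset_lieSpan a.2⟩
  have hχa : χ a' = φ a := smul_left_injective K hu0 ((hχ a').symm.trans (hu a))
  simpa [hχa] using Module.End.forall_apply_eq_smul_of_mem_normalizer hX𝔞 χ hχ a'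
end

section
/- With notation as in Proposition 2.2 (L = 𝒜 ⊕ k·x with 𝒜 an ideal containing all ⟨L,L⟩_s, V a finite-dimensional ordinary L-module over an algebraically closed field of characteristic 0, φ_k, ψ_k : 𝒜 → k functionals, U_φ := ∩_k { u : f_k(A)u = φ_k(A)u for all A ∈ 𝒜 }, U_ψ := ∩_k { u : g_k(A)u = ψ_k(A)u for all A ∈ 𝒜 }): the subspace U_φ ∩ U_ψ is invariant under f_h(x) for all h ∈ S. -/
/-!
Every operator `f k a`, `g k a` with `a ∈ 𝒜` acts on `u` by a scalar, and because `𝒜` is an ideal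
the module axioms turn the commutator of such an operator with `f h x` into an operator of the same
kind. The Lie span `H` of these operators is an ideal of its normalizer, which contains `f h x`, so
the invariance lemma behind Lie's theorem (`LieModule.weightSpaceOfIsLieTower`) shows that
`f h x u` is again a common eigenvector of `H`, with the same eigenvalues; its proof is a trace
argument on the `f h x`-cyclic subspace generated by `u`.
-/

namespace LieSubalgebra

variable {R L : Type*} [CommRing R] [LieRing L] [LieAlgebra R L]

theorem mem_normalizer_lieSpan {s : Set L} {x : L} (hx : ∀ y ∈ s, ⁅x, y⁆ ∈ lieSpan R L s) :
    x ∈ (lieSpan R L s).normalizer := by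
  rw [mem_normalizer_iff]
  intro y hy
  induction hy using lieSpan_induction with
  | mem y hy => exact hx y hy
  | zero => simp
  | add y z _ _ hy hz => simpa only [lie_add] using add_mem hy hz
  | smul c y _ hy => simpa only [lie_smul] using (lieSpan R L s).smul_mem c hy
  | lie y z hy' hz' hy hz =>
    rw [leibniz_lie]
    exact add_mem (lie_mem _ hy hz') (lie_mem _ hy' hz)

end LieSubalgebra

attribute [local instance 100] LieRing.ofAssociativeRing

namespace Module.End

variable {K V : Type*} [Field K] [AddCommGroup V] [Module K V]

def lineStabilizer (u : V) : LieSubalgebra K (Module.End K V) where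
  carrier := {P | ∃ c : K, P u = c • u}
  zero_mem' := ⟨0, by simp⟩
  add_mem' := by
    rintro P Q ⟨c, hc⟩ ⟨d, hd⟩
    exact ⟨c + d, by simp [hc, hd, add_smul]⟩
  smul_mem' := by
    rintro a P ⟨c, hc⟩
    exact ⟨a * c, by simp [hc, mul_smul]⟩
  lie_mem' := by
    rintro P Q ⟨c, hc⟩ ⟨d, hd⟩
    exact ⟨0, by simp [Ring.lie_def, hc, hd, smul_smul, mul_comm]⟩

theorem apply_apply_eq_smul_of_lie_mem [CharZero K] [FiniteDimensional K V]
    {F : Module.End K V} {T : Set (Module.End K V)} (hT : ∀ P ∈ T, ⁅P, F⁆ ∈ T) {u : V}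
    (hu : ∀ P ∈ T, ∃ c : K, P u = c • u) {P : Module.End K V} (hP : P ∈ T) {c : K}
    (hc : P u = c • u) : P (F u) = c • F u := by
  set H := LieSubalgebra.lieSpan K _ T
  have hF : F ∈ H.normalizer := LieSubalgebra.mem_normalizer_lieSpan fun Q hQ => by
    rw [← lie_skew, neg_mem_iff]
    exact LieSubalgebra.subset_lieSpan (hT Q hQ)
  obtain ⟨I, hI⟩ := LieSubalgebra.exists_nested_lieIdeal_ofLe_normalizer H.le_normalizer le_rfl
  have mem_I : ∀ Q : H.normalizer, Q ∈ (I : LieSubalgebra K H.normalizer) ↔ (Q : Module.End K V) ∈ H := by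
    intro Q
    rw [hI, LieSubalgebra.mem_ofLe]
  have hHu : H ≤ lineStabilizer u := LieSubalgebra.lieSpan_le.mpr hu
  choose χ hχ using fun a : I => hHu ((mem_I a).mp a.2)
  have hu_mem : u ∈ LieModule.weightSpace V χ := (LieModule.mem_weightSpace _ _).mpr hχ
  have hFu := (LieModule.weightSpaceOfIsLieTower K V χ).lie_mem (x := (⟨F, hF⟩ : H.normalizer)) hu_mem
  let a : I := ⟨⟨P, H.le_normalizer (LieSubalgebra.subset_lieSpan hP)⟩,
    (mem_I _).mpr (LieSubalgebra.subset_lieSpan hP)⟩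
  have hPFu : P (F u) = χ a • F u := (LieModule.mem_weightSpace _ _).mp hFu a
  rcases eq_or_ne u 0 with rfl | hu0
  · simp
  rwa [smul_left_injective K hu0 ((hχ a).symm.trans hc)] at hPFu

end Module.End

theorem stmt_7_general {K : Type*} [Field K] [CharZero K]
    {S : Type*}
    {L : Type*} [AddCommGroup L] [Module K L]
    {V : Type*} [AddCommGroup V] [Module K V] [FiniteDimensional K V]
    (br : S → L →ₗ[K] L →ₗ[K] L)
    (A : Submodule K L) (x : L)
    (hideal : ∀ (s : S), ∀ a ∈ A, ∀ z : L, br s a z ∈ A ∧ br s z a ∈ A)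
    (f g : S → L →ₗ[K] Module.End K V)
    (hf : ∀ (h k : S) (x y : L), f h (br k x y) = f h x * f k y - f k y * f h x)
    (hg : ∀ (h k : S) (x y : L), g h (br k x y) = g h x * f k y - f k y * g h x)
    (φ ψ : S → A → K) :
    ∀ (h : S) (u : V),
      (∀ (k : S) (a : A), f k a.1 u = φ k a • u) →
      (∀ (k : S) (a : A), g k a.1 u = ψ k a • u) →
      (∀ (k : S) (a : A), f k a.1 (f h x u) = φ k a • f h x u) ∧
      (∀ (k : S) (a : A), g k a.1 (f h x u) = ψ k a • f h x u) := by
  intro h u hφ hψ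
  set T : Set (Module.End K V) := {P | ∃ (k : S) (a : A), P = f k a ∨ P = g k a}
  have hT : ∀ P ∈ T, ⁅P, f h x⁆ ∈ T := by
    rintro _ ⟨k, a, rfl | rfl⟩ <;> refine ⟨k, ⟨br h a x, (hideal h a a.2 x).1⟩, ?_⟩
    · exact Or.inl (hf k h a x).symm
    · exact Or.inr (hg k h a x).symm
  have hu : ∀ P ∈ T, ∃ c : K, P u = c • u := by
    rintro _ ⟨k, a, rfl | rfl⟩
    exacts [⟨_, hφ k a⟩, ⟨_, hψ k a⟩]
  exact ⟨fun k a => Module.End.apply_apply_eq_smul_of_lie_mem hT hu ⟨k, a, .inl rfl⟩ (hφ k a),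
    fun k a => Module.End.apply_apply_eq_smul_of_lie_mem hT hu ⟨k, a, .inr rfl⟩ (hψ k a)⟩

/-- Proposition 2.3 (2.21): U_φ ∩ U_ψ is invariant under f_h(x). -/
theorem stmt_7 {K : Type*} [Field K] [IsAlgClosed K] [CharZero K]
    {S : Type*} [Nonempty S]
    {L : Type*} [AddCommGroup L] [Module K L]
    {V : Type*} [AddCommGroup V] [Module K V] [FiniteDimensional K V]
    (br : S → L →ₗ[K] L →ₗ[K] L)
    (hjac : ∀ (s h : S) (x y z : L),
      br h (br s x y) z = br s x (br h y z) + br s (br h x z) y)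
    (hsw : ∀ (s h : S) (x y z : L), br h (br s x y) z = br s (br h x y) z)
    (A : Submodule K L) (x : L) (hx : x ∉ A)
    (hcompl : IsCompl A (Submodule.span K {x}))
    (hideal : ∀ (s : S), ∀ a ∈ A, ∀ z : L, br s a z ∈ A ∧ br s z a ∈ A)
    (hLL : ∀ (s : S) (a b : L), br s a b ∈ A)
    (f g : S → L →ₗ[K] Module.End K V)
    (hf : ∀ (h k : S) (x y : L), f h (br k x y) = f h x * f k y - f k y * f h x)
    (hg : ∀ (h k : S) (x y : L), g h (br k x y) = g h x * f k y - f k y * g h x)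
    (hgg : ∀ (h k : S) (x y : L),
      g k x * g h y = g h x * f k y ∧ g h x * f k y = g k x * f h y)
    (hff : ∀ (h k : S) (x y : L), f k x * f h y = f h x * f k y)
    (hfg : ∀ (h k : S) (x y : L), f k x * g h y = f h x * g k y)
    (φ ψ : S → A → K) :
    ∀ (h : S) (u : V),
      (∀ (k : S) (a : A), f k a.1 u = φ k a • u) →
      (∀ (k : S) (a : A), g k a.1 u = ψ k a • u) →
      (∀ (k : S) (a : A), f k a.1 (f h x u) = φ k a • f h x u) ∧
      (∀ (k : S) (a : A), g k a.1 (f h x u) = ψ k a • f h x u) :=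
  stmt_7_general br A x hideal f g hf hg φ ψ
end

section
/- With L = 𝒜 ⊕ k·x a finite-dimensional Lie-like algebra^{2-nd} over an algebraically closed field of characteristic 0, 𝒜 an ideal with ⟨L,L⟩_s ⊆ 𝒜, and V a finite-dimensional ordinary L-module: if u ∈ U_φ ∩ U_ψ (a common eigenvector for all f_k(𝒜) with functionals φ_k and for all g_k(𝒜) with functionals ψ_k) and u ∉ V^{ann,+}, then ψ_h(⟨x, A⟩_k) = 0 for all A ∈ 𝒜 and h, k ∈ S. -/
/-!
Since `u` lies outside `V^{ann,+}`, the vector `(g_h(b) - f_h(b)) u = (ψ_h(b) - φ_h(b)) u` must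
vanish, so `ψ_h = φ_h` and it suffices to show that `f_h(⟨x, a⟩_k) = ⁅f_h(x), f_k(a)⁆` kills `u`.
Put `X = f_h(x)`; the operators `f_s(b)`, `b ∈ 𝒜`, form a set stable under `ad X` having `u` as a
common eigenvector. Along the filtration of the `X`-cyclic subspace `W` of `u` by the spans of
`u, X u, …, X^(i-1) u`, each such `T` acts as its eigenvalue `χ(T)` plus an operator lowering the
filtration, so `tr (T|_W) = dim W · χ(T)`. Applied to `⁅X, T⁆`, whose trace on `W` vanishes, this
gives `χ(⁅X, T⁆) = 0` in characteristic zero.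
-/

open Module

namespace Module.End

variable {K V : Type*} [Field K] [AddCommGroup V] [Module K V]

lemma trace_eq_finrank_mul_of_isNilpotent_sub_smul_one [FiniteDimensional K V] {T : End K V}
    {c : K} (h : IsNilpotent (T - c • 1)) : LinearMap.trace K V T = finrank K V * c := by
  have hT : T = (T - c • 1) + c • 1 := by abel
  rw [hT, map_add, (LinearMap.isNilpotent_trace_of_isNilpotent h).eq_zero, map_smul,
    LinearMap.trace_one, zero_add, smul_eq_mul, mul_comm]

lemma restrict_lie {f g : End K V} {p : Submodule K V} (hf : p ≤ p.comap f) (hg : p ≤ p.comap g)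
    (hfg : p ≤ p.comap ⁅f, g⁆) : ⁅f, g⁆.restrict hfg = ⁅f.restrict hf, g.restrict hg⁆ := by
  ext
  simp [Ring.lie_def]

def krylov (X : End K V) (u : V) (n : ℕ) : Submodule K V :=
  Submodule.span K ((fun j ↦ (X ^ j) u) '' Set.Iio n)

variable {X : End K V} {u : V}

lemma krylov_le_iff {n : ℕ} {W : Submodule K V} :
    krylov X u n ≤ W ↔ ∀ j < n, (X ^ j) u ∈ W := by
  simp [krylov, Submodule.span_le, Set.subset_def]

lemma pow_apply_mem_krylov {j n : ℕ} (h : j < n) : (X ^ j) u ∈ krylov X u n :=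
  Submodule.subset_span ⟨j, h, rfl⟩

lemma krylov_mono : Monotone (krylov X u) := fun _ _ hmn ↦
  krylov_le_iff.2 fun _ hj ↦ pow_apply_mem_krylov (hj.trans_le hmn)

lemma krylov_le_comap_succ (n : ℕ) : krylov X u n ≤ (krylov X u (n + 1)).comap X :=
  krylov_le_iff.2 fun j hj ↦ by
    rw [Submodule.mem_comap, ← mul_apply, ← pow_succ']
    exact pow_apply_mem_krylov (by omega)

lemma exists_mem_krylov_le_comap [FiniteDimensional K V] (X : End K V) (u : V) :
    ∃ n, u ∈ krylov X u n ∧ krylov X u n ≤ (krylov X u n).comap X := by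
  obtain ⟨n, hn⟩ :=
    monotone_stabilizes_iff_noetherian.2 inferInstance ⟨krylov X u, krylov_mono⟩
  refine ⟨n + 1, by simpa using pow_apply_mem_krylov (X := X) (u := u) n.succ_pos, ?_⟩
  have hstab : krylov X u (n + 2) = krylov X u (n + 1) :=
    (hn (n + 2) (by omega)).symm.trans (hn (n + 1) (by omega))
  have := krylov_le_comap_succ (X := X) (u := u) (n + 1)
  rwa [hstab] at this

section Weight

variable {𝒯 : Set (End K V)} {χ : End K V → K}
  (h𝒯 : ∀ T ∈ 𝒯, ⁅T, X⁆ ∈ 𝒯) (hχ : ∀ T ∈ 𝒯, T u = χ T • u)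
include h𝒯 hχ

lemma sub_smul_one_apply_pow_mem_krylov (i : ℕ) :
    ∀ T ∈ 𝒯, (T - χ T • 1) ((X ^ i) u) ∈ krylov X u i := by
  induction i with
  | zero =>
    intro T hT
    simp [hχ T hT]
  | succ i ih =>
    intro T hT
    have hsplit : (T - χ T • 1) ((X ^ (i + 1)) u) =
        X ((T - χ T • 1) ((X ^ i) u)) + (⁅T, X⁆ - χ ⁅T, X⁆ • 1) ((X ^ i) u) +
          χ ⁅T, X⁆ • (X ^ i) u := by
      simp only [pow_succ', mul_apply, Ring.lie_def, LinearMap.sub_apply, LinearMap.smul_apply,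
        one_apply, map_sub, map_smul]
      abel
    rw [hsplit]
    exact add_mem
      (add_mem (krylov_le_comap_succ i (ih T hT)) (krylov_mono i.le_succ (ih _ (h𝒯 T hT))))
      (Submodule.smul_mem _ _ (pow_apply_mem_krylov i.lt_succ_self))

lemma krylov_le_comap_of_mem {T : End K V} (hT : T ∈ 𝒯) (n : ℕ) :
    krylov X u n ≤ (krylov X u n).comap T :=
  krylov_le_iff.2 fun j hj ↦ by
    have hTj : T ((X ^ j) u) = (T - χ T • 1) ((X ^ j) u) + χ T • (X ^ j) u := by simp
    rw [Submodule.mem_comap, hTj]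
    exact add_mem (krylov_mono hj.le (sub_smul_one_apply_pow_mem_krylov h𝒯 hχ j T hT))
      (Submodule.smul_mem _ _ (pow_apply_mem_krylov hj))

lemma krylov_le_genEigenspace {T : End K V} (hT : T ∈ 𝒯) (n : ℕ) :
    krylov X u n ≤ T.genEigenspace (χ T) n := by
  induction n with
  | zero => exact krylov_le_iff.2 fun _ hj ↦ absurd hj (Nat.not_lt_zero _)
  | succ n ih =>
    refine krylov_le_iff.2 fun j hj ↦ ?_
    rw [mem_genEigenspace_nat, LinearMap.mem_ker, pow_succ, mul_apply]
    exact mem_genEigenspace_nat.1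
      (ih (krylov_mono (Nat.lt_succ_iff.1 hj) (sub_smul_one_apply_pow_mem_krylov h𝒯 hχ j T hT)))

lemma trace_restrict_krylov [FiniteDimensional K V] {T : End K V} (hT : T ∈ 𝒯) (n : ℕ) :
    LinearMap.trace K _ (T.restrict (krylov_le_comap_of_mem h𝒯 hχ hT n)) =
      finrank K (krylov X u n) * χ T := by
  apply trace_eq_finrank_mul_of_isNilpotent_sub_smul_one
  have hsub : T.restrict (krylov_le_comap_of_mem h𝒯 hχ hT n) - χ T • 1 =
      (T - χ T • 1).restrict (p := krylov X u n) (q := krylov X u n) fun _ hv ↦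
        sub_mem (krylov_le_comap_of_mem h𝒯 hχ hT n hv) (Submodule.smul_mem _ _ hv) := by
    ext
    simp
  rw [hsub]
  exact isNilpotent_restrict_of_le (krylov_le_genEigenspace h𝒯 hχ hT n)
    (isNilpotent_restrict_genEigenspace_nat T (χ T) n)

end Weight

theorem lie_apply_eq_zero_of_forall_exists_apply_eq_smul [FiniteDimensional K V] [CharZero K]
    {𝒯 : Set (End K V)} (h𝒯 : ∀ T ∈ 𝒯, ⁅T, X⁆ ∈ 𝒯) (hu : ∀ T ∈ 𝒯, ∃ c : K, T u = c • u)
    {T : End K V} (hT : T ∈ 𝒯) (hXT : ⁅X, T⁆ ∈ 𝒯) : ⁅X, T⁆ u = 0 := by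
  rcases eq_or_ne u 0 with rfl | hu0
  · exact map_zero _
  choose! χ hχ using hu
  obtain ⟨n, hun, hX⟩ := exists_mem_krylov_le_comap X u
  have htrace : (finrank K (krylov X u n) : K) * χ ⁅X, T⁆ = 0 := by
    rw [← trace_restrict_krylov h𝒯 hχ hXT n,
      restrict_lie hX (krylov_le_comap_of_mem h𝒯 hχ hT n), LinearMap.trace_lie]
  have hpos : finrank K (krylov X u n) ≠ 0 := fun h ↦
    hu0 ((Submodule.eq_bot_iff _).1 (Submodule.finrank_eq_zero.1 h) u hun)
  rw [hχ _ hXT, (mul_eq_zero.1 htrace).resolve_left (Nat.cast_ne_zero.2 hpos), zero_smul]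

end Module.End

theorem stmt_8_general {K : Type*} [Field K] [CharZero K]
    {S : Type*}
    {L : Type*} [AddCommGroup L] [Module K L]
    {V : Type*} [AddCommGroup V] [Module K V] [FiniteDimensional K V]
    (br : S → L →ₗ[K] L →ₗ[K] L)
    (A : Submodule K L) (x : L)
    (hLL : ∀ (s : S) (a b : L), br s a b ∈ A)
    (f g : S → L →ₗ[K] Module.End K V)
    (hf : ∀ (h k : S) (x y : L), f h (br k x y) = f h x * f k y - f k y * f h x)
    (φ ψ : S → A → K) (u : V)
    (hfu : ∀ (k : S) (a : A), f k a.1 u = φ k a • u)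
    (hgu : ∀ (k : S) (a : A), g k a.1 u = ψ k a • u)
    (hann : u ∉ Submodule.span K
      {w : V | ∃ (s t : S) (y : L) (v : V), w = (g s y - f t y) v}) :
    ∀ (h k : S) (a : A), ψ h ⟨br k x a.1, hLL k x a.1⟩ = 0 := by
  intro h k a
  set b : A := ⟨br k x a.1, hLL k x a.1⟩
  have hu : u ≠ 0 := fun hu ↦ hann (hu ▸ Submodule.zero_mem _)
  have hψφ : ψ h b = φ h b := by
    by_contra hne
    refine hann ?_
    have hmem : (ψ h b - φ h b) • u ∈ Submodule.span K
        {w : V | ∃ (s t : S) (y : L) (v : V), w = (g s y - f t y) v} := by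
      rw [sub_smul, ← hgu, ← hfu]
      exact Submodule.subset_span ⟨h, h, b.1, u, rfl⟩
    simpa [smul_smul, inv_mul_cancel₀ (sub_ne_zero.2 hne)] using
      Submodule.smul_mem _ (ψ h b - φ h b)⁻¹ hmem
  have hbracket : ∀ (s : S) (c : L), ⁅f s c, f h x⁆ = f s (br h c x) := fun s c ↦
    (Ring.lie_def _ _).trans (hf s h c x).symm
  have hb : ⁅f h x, f k a.1⁆ = f h b.1 := (Ring.lie_def _ _).trans (hf h k x a.1).symm
  have hkill := Module.End.lie_apply_eq_zero_of_forall_exists_apply_eq_smul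
    (𝒯 := Set.range fun sc : S × A ↦ f sc.1 sc.2.1)
    (by rintro _ ⟨⟨s, c⟩, rfl⟩; exact ⟨(s, ⟨br h c.1 x, hLL h c.1 x⟩), (hbracket s c.1).symm⟩)
    (by rintro _ ⟨⟨s, c⟩, rfl⟩; exact ⟨φ s c, hfu s c⟩) ⟨(k, a), rfl⟩ ⟨(h, b), hb.symm⟩
  rw [hb, hfu h b] at hkill
  rw [hψφ]
  exact (smul_eq_zero.1 hkill).resolve_right hu

/-- The trace argument (2.32): for u ∈ (U_φ ∩ U_ψ) \ V^{ann,+},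
    ψ_h(⟨x, A⟩_k) = 0 for all A ∈ 𝒜 and h, k ∈ S. -/
theorem stmt_8 {K : Type*} [Field K] [IsAlgClosed K] [CharZero K]
    {S : Type*} [Nonempty S]
    {L : Type*} [AddCommGroup L] [Module K L]
    {V : Type*} [AddCommGroup V] [Module K V] [FiniteDimensional K V]
    (br : S → L →ₗ[K] L →ₗ[K] L)
    (hjac : ∀ (s h : S) (x y z : L),
      br h (br s x y) z = br s x (br h y z) + br s (br h x z) y)
    (hsw : ∀ (s h : S) (x y z : L), br h (br s x y) z = br s (br h x y) z)
    (A : Submodule K L) (x : L) (hx : x ∉ A)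
    (hcompl : IsCompl A (Submodule.span K {x}))
    (hideal : ∀ (s : S), ∀ a ∈ A, ∀ z : L, br s a z ∈ A ∧ br s z a ∈ A)
    (hLL : ∀ (s : S) (a b : L), br s a b ∈ A)
    (f g : S → L →ₗ[K] Module.End K V)
    (hf : ∀ (h k : S) (x y : L), f h (br k x y) = f h x * f k y - f k y * f h x)
    (hg : ∀ (h k : S) (x y : L), g h (br k x y) = g h x * f k y - f k y * g h x)
    (hgg : ∀ (h k : S) (x y : L),
      g k x * g h y = g h x * f k y ∧ g h x * f k y = g k x * f h y)
    (hff : ∀ (h k : S) (x y : L), f k x * f h y = f h x * f k y)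
    (hfg : ∀ (h k : S) (x y : L), f k x * g h y = f h x * g k y)
    [FiniteDimensional K L]
    (φ ψ : S → A → K) (u : V)
    (hfu : ∀ (k : S) (a : A), f k a.1 u = φ k a • u)
    (hgu : ∀ (k : S) (a : A), g k a.1 u = ψ k a • u)
    (hann : u ∉ Submodule.span K
      {w : V | ∃ (s t : S) (y : L) (v : V), w = (g s y - f t y) v}) :
    ∀ (h k : S) (a : A), ψ h ⟨br k x a.1, hLL k x a.1⟩ = 0 :=
  stmt_8_general br A x hLL f g hf φ ψ u hfu hgu hann
end

section
/- Let L be a Lie-like algebra^{2-nd} induced by S over a field of characteristic 0, and let (V, {f_k}, {g_k}) be a finite-dimensional ordinary L-module. Suppose L = 𝒜 ⊕ k·x with 𝒜 an ideal and ⟨L,L⟩_s ⊆ 𝒜 for all s. In the situation where f_h(x)(u) = g_h(x)(u) for all h ∈ S and all u in U := U_φ ∩ U_ψ (the joint eigenspace for f_k(𝒜) with functionals φ_k and g_k(𝒜) with functionals ψ_k, assumed to satisfy U ∩ V^{ann,+} = 0 and U ≠ 0), the subspace U is invariant under g_h(x) for every h ∈ S. -/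
/-! Since `g_h(x) = f_h(x)` on `U`, it suffices that `f_h(x)` preserves `U_φ` and `U_ψ`. Commuting
`f_k(a)`, resp. `g_k(a)`, past `f_h(x)` by the module axioms leaves the error terms
`φ_h(⟨x,a⟩_k) u` and `ψ_k(⟨a,x⟩_h) u`. For `u ≠ 0`, the condition `U ∩ V^{ann,+} = 0` applied to
`(g_s(b) - f_t(b)) u` forces `ψ_s = φ_t` on `𝒜`, so it remains to see that `φ_h` vanishes on
`⟨x,a⟩_k` and `⟨a,x⟩_h`. This is the trace argument of Lie's lemma: with `X = f_h(x)`, the family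
`f_k(𝒜)` is stable under `[X, ·]`, so on the span `W` of `u, X u, X² u, …` each `f_k(a)` is
triangular with diagonal `φ_k(a)`. Hence the trace on `W` of `f_h(⟨x,a⟩_k) = [X, f_k(a)]` (and of
`f_h(⟨a,x⟩_h) = -[X, f_h(a)]`) is both `0` and `dim W · φ_h(…)`, and `dim W ≠ 0` in characteristic
`0`.
-/

section Krylov

variable {K V : Type*} [Field K] [AddCommGroup V] [Module K V]

theorem trace_restrict_eq_finrank_mul [FiniteDimensional K V] {f : Module.End K V} {μ : K}
    {W : Submodule K V} (hW : Set.MapsTo f W W) (hle : W ≤ f.maxGenEigenspace μ) :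
    LinearMap.trace K W (f.restrict hW) = Module.finrank K W * μ := by
  have hsub : Set.MapsTo (f - μ • (1 : Module.End K V)) W W := fun w hw =>
    W.sub_mem (hW hw) (W.smul_mem μ hw)
  have hnil : IsNilpotent ((f - μ • 1).restrict hsub) :=
    Module.End.isNilpotent_restrict_of_le hle
      (Module.End.isNilpotent_restrict_genEigenspace_top f μ)
  have hdecomp : f.restrict hW = (f - μ • 1).restrict hsub + μ • 1 := by
    ext w
    change f w = (f - μ • 1) (w : V) + μ • (w : V)
    simp
  rw [hdecomp, map_add, (LinearMap.isNilpotent_trace_of_isNilpotent hnil).eq_zero, map_smul,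
    LinearMap.trace_one, zero_add, smul_eq_mul, mul_comm]

def krylov (X : Module.End K V) (u : V) (n : ℕ) : Submodule K V :=
  Submodule.span K {(X ^ j) u | j < n}

def krylovSpace (X : Module.End K V) (u : V) : Submodule K V :=
  Submodule.span K (Set.range fun n => (X ^ n) u)

variable (X : Module.End K V) (u : V)

theorem krylov_mono : Monotone (krylov X u) := fun _ _ hmn =>
  Submodule.span_mono fun _ ⟨j, hj, hw⟩ => ⟨j, hj.trans_le hmn, hw⟩

theorem krylov_zero : krylov X u 0 = ⊥ := by
  simp [krylov]

theorem pow_apply_mem_krylov {j n : ℕ} (h : j < n) : (X ^ j) u ∈ krylov X u n :=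
  Submodule.subset_span ⟨j, h, rfl⟩

theorem krylov_le_krylovSpace (n : ℕ) : krylov X u n ≤ krylovSpace X u :=
  Submodule.span_mono fun _ ⟨j, _, hw⟩ => ⟨j, hw⟩

theorem mem_krylovSpace : u ∈ krylovSpace X u :=
  Submodule.subset_span ⟨0, by simp⟩

theorem map_krylov_le (n : ℕ) : (krylov X u n).map X ≤ krylov X u (n + 1) := by
  rw [krylov, Submodule.map_span_le]
  rintro _ ⟨j, hj, rfl⟩
  rw [← Module.End.mul_apply, ← pow_succ']
  exact pow_apply_mem_krylov X u (Nat.succ_lt_succ hj)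

theorem mapsTo_krylovSpace : Set.MapsTo X (krylovSpace X u) (krylovSpace X u) := by
  intro w hw
  suffices (krylovSpace X u).map X ≤ krylovSpace X u from this ⟨w, hw, rfl⟩
  rw [krylovSpace, Submodule.map_span_le]
  rintro _ ⟨j, rfl⟩
  rw [← Module.End.mul_apply, ← pow_succ']
  exact Submodule.subset_span ⟨j + 1, rfl⟩

variable {ι : Type*} {F : ι → Module.End K V} {χ : ι → K}
  (heig : ∀ i, F i u = χ i • u) (hcomm : ∀ i, ∃ j, ⁅X, F i⁆ = F j)
include heig hcomm

theorem sub_smul_apply_pow_mem_krylov (n : ℕ) (i : ι) :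
    (F i - χ i • 1) ((X ^ n) u) ∈ krylov X u n := by
  induction n generalizing i with
  | zero => simp [heig]
  | succ n ih =>
    obtain ⟨j, hj⟩ := hcomm i
    have hstep : (F i - χ i • 1) ((X ^ (n + 1)) u) =
        X ((F i - χ i • 1) ((X ^ n) u)) - (F j - χ j • 1) ((X ^ n) u) - χ j • (X ^ n) u := by
      have := congrArg (· ((X ^ n) u)) hj
      simp only [Ring.lie_def, LinearMap.sub_apply, Module.End.mul_apply] at this
      simp only [pow_succ', Module.End.mul_apply, LinearMap.sub_apply, LinearMap.smul_apply,
        Module.End.one_apply, map_sub, map_smul, ← this]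
      abel
    rw [hstep]
    refine sub_mem (sub_mem ?_ (krylov_mono X u n.le_succ (ih j))) ?_
    · exact map_krylov_le X u n ⟨_, ih i, rfl⟩
    · exact Submodule.smul_mem _ _ (pow_apply_mem_krylov X u n.lt_succ_self)

theorem map_sub_smul_krylov_succ_le (n : ℕ) (i : ι) :
    (krylov X u (n + 1)).map (F i - χ i • 1) ≤ krylov X u n := by
  rw [krylov, Submodule.map_span_le]
  rintro _ ⟨j, hj, rfl⟩
  exact krylov_mono X u (Nat.lt_succ_iff.mp hj) (sub_smul_apply_pow_mem_krylov X u heig hcomm j i)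

theorem pow_sub_smul_apply_eq_zero_of_mem_krylov (i : ι) (n : ℕ) {w : V}
    (hw : w ∈ krylov X u n) : ((F i - χ i • 1) ^ n) w = 0 := by
  induction n generalizing w with
  | zero => simpa [krylov_zero] using hw
  | succ n ih =>
    rw [pow_succ, Module.End.mul_apply]
    exact ih (map_sub_smul_krylov_succ_le X u heig hcomm n i ⟨w, hw, rfl⟩)

theorem krylovSpace_le_maxGenEigenspace (i : ι) :
    krylovSpace X u ≤ (F i).maxGenEigenspace (χ i) := by
  rw [krylovSpace, Submodule.span_le]
  rintro _ ⟨n, rfl⟩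
  exact (Module.End.mem_maxGenEigenspace _ _ _).mpr
    ⟨n + 1, pow_sub_smul_apply_eq_zero_of_mem_krylov X u heig hcomm i _
      (pow_apply_mem_krylov X u n.lt_succ_self)⟩

theorem mapsTo_krylovSpace_of_lie_eq (i : ι) :
    Set.MapsTo (F i) (krylovSpace X u) (krylovSpace X u) := by
  intro w hw
  suffices (krylovSpace X u).map (F i) ≤ krylovSpace X u from this ⟨w, hw, rfl⟩
  rw [krylovSpace, Submodule.map_span_le]
  rintro _ ⟨n, rfl⟩
  have hdecomp : F i ((X ^ n) u) = (F i - χ i • 1) ((X ^ n) u) + χ i • (X ^ n) u := by simp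
  rw [hdecomp]
  exact add_mem (krylov_le_krylovSpace X u n (sub_smul_apply_pow_mem_krylov X u heig hcomm n i))
    (Submodule.smul_mem _ _ (Submodule.subset_span ⟨n, rfl⟩))

theorem weight_eq_zero_of_eq_smul_lie [FiniteDimensional K V] [CharZero K] (hu : u ≠ 0)
    {i j : ι} (c : K) (hj : F j = c • ⁅X, F i⁆) : χ j = 0 := by
  set W := krylovSpace X u
  have hX := mapsTo_krylovSpace X u
  have hF := mapsTo_krylovSpace_of_lie_eq X u heig hcomm
  have hres : (F j).restrict (hF j) = c • ⁅X.restrict hX, (F i).restrict (hF i)⁆ := by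
    ext w
    change F j w = _
    simp [hj, Ring.lie_def]
    rfl
  have htrace : LinearMap.trace K W ((F j).restrict (hF j)) = Module.finrank K W * χ j :=
    trace_restrict_eq_finrank_mul (hF j) (krylovSpace_le_maxGenEigenspace X u heig hcomm j)
  rw [hres, map_smul, LinearMap.trace_lie, smul_zero] at htrace
  have hW : Module.finrank K W ≠ 0 := fun h =>
    hu ((Submodule.eq_bot_iff _).mp (Submodule.finrank_eq_zero.mp h) u (mem_krylovSpace X u))
  exact (mul_eq_zero.mp htrace.symm).resolve_left (Nat.cast_ne_zero.mpr hW)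

end Krylov

section LieLikeModule

variable {K S L V : Type*} [Field K] [AddCommGroup L] [Module K L] [AddCommGroup V] [Module K V]
  {br : S → L →ₗ[K] L →ₗ[K] L} {A : Submodule K L} {f g : S → L →ₗ[K] Module.End K V}
  {φ ψ : S → A → K} {u : V}

/-- Membership in the paper's joint eigenspace `U_φ`. -/
def IsJointEigenvector (f : S → L →ₗ[K] Module.End K V) (A : Submodule K L) (φ : S → A → K)
    (u : V) : Prop :=
  ∀ (k : S) (a : A), f k a u = φ k a • u

/-- The paper's `V^{ann,+}`. -/
def annPlus (f g : S → L →ₗ[K] Module.End K V) : Submodule K V :=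
  Submodule.span K {w : V | ∃ (s t : S) (y : L) (v : V), w = (g s y - f t y) v}

theorem IsJointEigenvector.zero : IsJointEigenvector f A φ 0 := by
  simp [IsJointEigenvector]

theorem IsJointEigenvector.smul (hu : IsJointEigenvector f A φ u) (c : K) :
    IsJointEigenvector f A φ (c • u) := fun k a => by
  rw [map_smul, hu k a, smul_comm]

theorem IsJointEigenvector.weight_eq_of_annPlus
    (hcap : ∀ u, IsJointEigenvector f A φ u → IsJointEigenvector g A ψ u → u ∈ annPlus f g → u = 0)
    (hfu : IsJointEigenvector f A φ u) (hgu : IsJointEigenvector g A ψ u) (hu : u ≠ 0)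
    (s t : S) (b : A) : ψ s b = φ t b := by
  have hmem : (ψ s b - φ t b) • u ∈ annPlus f g := by
    have hval : (g s b - f t b) u = (ψ s b - φ t b) • u := by
      rw [LinearMap.sub_apply, hgu s b, hfu t b, sub_smul]
    exact hval ▸ Submodule.subset_span ⟨s, t, b, u, rfl⟩
  have hzero := hcap _ (hfu.smul _) (hgu.smul _) hmem
  exact sub_eq_zero.mp ((smul_eq_zero.mp hzero).resolve_right hu)

variable (hLL : ∀ (s : S) (a b : L), br s a b ∈ A)
  (hf : ∀ (h k : S) (x y : L), f h (br k x y) = f h x * f k y - f k y * f h x)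
include hLL hf

theorem exists_lie_f_eq_f (k : S) (y : L) (p : S × A) :
    ∃ q : S × A, ⁅f k y, f p.1 p.2⁆ = f q.1 q.2 :=
  ⟨(k, ⟨br p.1 y p.2, hLL _ _ _⟩), by rw [Ring.lie_def, hf]⟩

variable [FiniteDimensional K V] [CharZero K]

theorem IsJointEigenvector.weight_br_left_eq_zero (hfu : IsJointEigenvector f A φ u)
    (hu : u ≠ 0) (h k : S) (y : L) (a : A) : φ h ⟨br k y a, hLL k y a⟩ = 0 :=
  weight_eq_zero_of_eq_smul_lie (f h y) u (F := fun p : S × A => f p.1 p.2)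
    (χ := fun p => φ p.1 p.2) (fun p => hfu p.1 p.2) (exists_lie_f_eq_f hLL hf h y) hu
    (i := (k, a)) (j := (h, ⟨br k y a, hLL k y a⟩)) 1 (by rw [one_smul, Ring.lie_def, hf])

theorem IsJointEigenvector.weight_br_right_eq_zero (hfu : IsJointEigenvector f A φ u)
    (hu : u ≠ 0) (h k : S) (y : L) (a : A) : φ h ⟨br k a y, hLL k a y⟩ = 0 :=
  weight_eq_zero_of_eq_smul_lie (f k y) u (F := fun p : S × A => f p.1 p.2)
    (χ := fun p => φ p.1 p.2) (fun p => hfu p.1 p.2) (exists_lie_f_eq_f hLL hf k y) hu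
    (i := (h, a)) (j := (h, ⟨br k a y, hLL k a y⟩)) (-1)
    (by rw [neg_one_smul, Ring.lie_def, neg_sub, hf])

theorem IsJointEigenvector.f_apply (hfu : IsJointEigenvector f A φ u) (h : S) (y : L) :
    IsJointEigenvector f A φ (f h y u) := by
  rcases eq_or_ne u 0 with rfl | hu
  · simpa using IsJointEigenvector.zero
  intro k a
  calc f k a (f h y u) = f h y (f k a u) - f h (br k y a) u := by
        rw [hf, LinearMap.sub_apply, Module.End.mul_apply, Module.End.mul_apply, sub_sub_cancel]
    _ = φ k a • f h y u := by
        rw [hfu k a, hfu h ⟨_, hLL k y a⟩, hfu.weight_br_left_eq_zero hLL hf hu, zero_smul,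
          sub_zero, map_smul]

theorem IsJointEigenvector.f_apply_of_annPlus
    (hg : ∀ (h k : S) (x y : L), g h (br k x y) = g h x * f k y - f k y * g h x)
    (hcap : ∀ u, IsJointEigenvector f A φ u → IsJointEigenvector g A ψ u → u ∈ annPlus f g → u = 0)
    (hgu : IsJointEigenvector g A ψ u) (hfu : IsJointEigenvector f A φ u) (h : S) (y : L) :
    IsJointEigenvector g A ψ (f h y u) := by
  rcases eq_or_ne u 0 with rfl | hu
  · simpa using IsJointEigenvector.zero
  intro k a
  have hweight : ψ k ⟨br h a y, hLL h a y⟩ = 0 := by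
    rw [hfu.weight_eq_of_annPlus hcap hgu hu k h, hfu.weight_br_right_eq_zero hLL hf hu]
  calc g k a (f h y u) = f h y (g k a u) + g k (br h a y) u := by
        rw [hg, LinearMap.sub_apply, Module.End.mul_apply, Module.End.mul_apply, add_sub_cancel]
    _ = ψ k a • f h y u := by
        rw [hgu k a, hgu k ⟨_, hLL h a y⟩, hweight, zero_smul, add_zero, map_smul]

end LieLikeModule

theorem stmt_17_general {K : Type*} [Field K] [CharZero K]
    {S : Type*}
    {L : Type*} [AddCommGroup L] [Module K L]
    {V : Type*} [AddCommGroup V] [Module K V] [FiniteDimensional K V]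
    (br : S → L →ₗ[K] L →ₗ[K] L)
    (A : Submodule K L) (x : L)
    (hLL : ∀ (s : S) (a b : L), br s a b ∈ A)
    (f g : S → L →ₗ[K] Module.End K V)
    (hf : ∀ (h k : S) (x y : L), f h (br k x y) = f h x * f k y - f k y * f h x)
    (hg : ∀ (h k : S) (x y : L), g h (br k x y) = g h x * f k y - f k y * g h x)
    (φ ψ : S → A → K)
    (heq : ∀ (h : S) (u : V),
      (∀ (k : S) (a : A), f k a.1 u = φ k a • u) →
      (∀ (k : S) (a : A), g k a.1 u = ψ k a • u) →
      f h x u = g h x u)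
    (hcap : ∀ u : V,
      (∀ (k : S) (a : A), f k a.1 u = φ k a • u) →
      (∀ (k : S) (a : A), g k a.1 u = ψ k a • u) →
      u ∈ Submodule.span K
        {w : V | ∃ (s t : S) (y : L) (v : V), w = (g s y - f t y) v} →
      u = 0) :
    ∀ (h : S) (u : V),
      (∀ (k : S) (a : A), f k a.1 u = φ k a • u) →
      (∀ (k : S) (a : A), g k a.1 u = ψ k a • u) →
      (∀ (k : S) (a : A), f k a.1 (g h x u) = φ k a • g h x u) ∧
      (∀ (k : S) (a : A), g k a.1 (g h x u) = ψ k a • g h x u) := by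
  intro h u hfu hgu
  rw [← heq h u hfu hgu]
  exact ⟨IsJointEigenvector.f_apply hLL hf hfu h x,
    IsJointEigenvector.f_apply_of_annPlus hLL hf hg hcap hgu hfu h x⟩

/-- Case 2 of the proof of the main theorem: if f_h(x) = g_h(x) on
    U = U_φ ∩ U_ψ, U ∩ V^{ann,+} = 0 and U ≠ 0, then U is invariant under
    g_h(x) for every h. -/
theorem stmt_17 {K : Type*} [Field K] [IsAlgClosed K] [CharZero K]
    {S : Type*} [Nonempty S]
    {L : Type*} [AddCommGroup L] [Module K L]
    {V : Type*} [AddCommGroup V] [Module K V] [FiniteDimensional K V]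
    (br : S → L →ₗ[K] L →ₗ[K] L)
    (hjac : ∀ (s h : S) (x y z : L),
      br h (br s x y) z = br s x (br h y z) + br s (br h x z) y)
    (hsw : ∀ (s h : S) (x y z : L), br h (br s x y) z = br s (br h x y) z)
    (A : Submodule K L) (x : L) (hx : x ∉ A)
    (hcompl : IsCompl A (Submodule.span K {x}))
    (hideal : ∀ (s : S), ∀ a ∈ A, ∀ z : L, br s a z ∈ A ∧ br s z a ∈ A)
    (hLL : ∀ (s : S) (a b : L), br s a b ∈ A)
    (f g : S → L →ₗ[K] Module.End K V)
    (hf : ∀ (h k : S) (x y : L), f h (br k x y) = f h x * f k y - f k y * f h x)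
    (hg : ∀ (h k : S) (x y : L), g h (br k x y) = g h x * f k y - f k y * g h x)
    (hgg : ∀ (h k : S) (x y : L),
      g k x * g h y = g h x * f k y ∧ g h x * f k y = g k x * f h y)
    (hff : ∀ (h k : S) (x y : L), f k x * f h y = f h x * f k y)
    (hfg : ∀ (h k : S) (x y : L), f k x * g h y = f h x * g k y)
    (φ ψ : S → A → K)
    (heq : ∀ (h : S) (u : V),
      (∀ (k : S) (a : A), f k a.1 u = φ k a • u) →
      (∀ (k : S) (a : A), g k a.1 u = ψ k a • u) →
      f h x u = g h x u)
    (hcap : ∀ u : V,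
      (∀ (k : S) (a : A), f k a.1 u = φ k a • u) →
      (∀ (k : S) (a : A), g k a.1 u = ψ k a • u) →
      u ∈ Submodule.span K
        {w : V | ∃ (s t : S) (y : L) (v : V), w = (g s y - f t y) v} →
      u = 0)
    (hne : ∃ u : V, u ≠ 0 ∧
      (∀ (k : S) (a : A), f k a.1 u = φ k a • u) ∧
      (∀ (k : S) (a : A), g k a.1 u = ψ k a • u)) :
    ∀ (h : S) (u : V),
      (∀ (k : S) (a : A), f k a.1 u = φ k a • u) →
      (∀ (k : S) (a : A), g k a.1 u = ψ k a • u) →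
      (∀ (k : S) (a : A), f k a.1 (g h x u) = φ k a • g h x u) ∧
      (∀ (k : S) (a : A), g k a.1 (g h x u) = ψ k a • g h x u) :=
  stmt_17_general br A x hLL f g hf hg φ ψ heq hcap
end
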